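/- Let a > 0, β > 0, μ > 0, c > 0, 0 < e < 1 and υ real, and set γ₁ = (1 − 3υ)/8, γ₂ = β(3 + υ)/2, γ₃ = βυ/2, γ₄ = β²/2. Then the mean-anomaly average of the relativistic two-body correction Hamiltonian, namely (1/(2πc²)) ∫₀^{2π} [ −γ₁ μ (β(2/r − 1/a))² − γ₂ μ β(2/r − 1/a)/r − γ₃ μ (β e² sin²E/(a(1 − e·cos E)²))/r + γ₄ μ/r² ] (1 − e·cos E) dE with r = a(1 − e·cos E), equals (μβ²/(a²c²)) · [ (15 − υ)/8 − 3/√(1 − e²) ]. -/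

import Mathlib

/-!
Writing `u = 1 - e cos E`, so that `r = a u`, and eliminating `sin² E = 1 - cos² E`, the integrand
becomes `μβ²/a²` times a combination of `1/u`, a constant, `cos E` and `(cos E - e)/u²`. The last
two are derivatives of the `2π`-periodic functions `sin E` and `sin E / u`, so they average to
zero, and the constant contributes `(15 - υ)/8`. The remaining `∫₀^{2π} dE/u = 2π/√(1 - e²)`
follows from an explicit antiderivative: with `b = e/(1 + √(1 - e²))`, `√(1 - e²)/u` is the Poisson
kernel `(1 - b²)/(1 - 2b cos E + b²)`, the derivative of `E + 2 arctan (b sin E/(1 - b cos E))`.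
-/

open Real

section OneSubMulCos

variable {b : ℝ}

lemma one_sub_mul_cos_pos (hb : |b| < 1) (x : ℝ) : 0 < 1 - b * cos x := by
  have : b * cos x ≤ |b| := (le_abs_self _).trans <| by
    rw [abs_mul]; exact mul_le_of_le_one_right (abs_nonneg b) (abs_cos_le_one x)
  linarith

lemma one_sub_two_mul_cos_add_sq_pos (hb : |b| < 1) (x : ℝ) : 0 < 1 - 2 * b * cos x + b ^ 2 := by
  nlinarith [one_sub_mul_cos_pos hb x, sin_sq_add_cos_sq x, sq_nonneg (b * sin x)]

lemma hasDerivAt_one_sub_mul_cos (b x : ℝ) :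
    HasDerivAt (fun y => 1 - b * cos y) (b * sin x) x := by
  simpa using ((hasDerivAt_cos x).const_mul b).const_sub 1

lemma hasDerivAt_add_two_mul_arctan (hb : |b| < 1) (x : ℝ) :
    HasDerivAt (fun y => y + 2 * arctan (b * sin y / (1 - b * cos y)))
      ((1 - b ^ 2) / (1 - 2 * b * cos x + b ^ 2)) x := by
  have hnum : HasDerivAt (fun y => b * sin y) (b * cos x) x := (hasDerivAt_sin x).const_mul b
  have hquot := hnum.div (hasDerivAt_one_sub_mul_cos b x) (one_sub_mul_cos_pos hb x).ne'
  refine ((hasDerivAt_id' x).add (hquot.arctan.const_mul 2)).congr_deriv ?_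
  have := (one_sub_mul_cos_pos hb x).ne'
  have := (one_sub_two_mul_cos_add_sq_pos hb x).ne'
  simp only [Pi.div_apply]
  field_simp
  linear_combination (2 * b ^ 3 * cos x - 2 * b ^ 2) * sin_sq_add_cos_sq x

end OneSubMulCos

lemma one_sub_sq_mul_one_sub_mul_cos {e s b : ℝ} (hs : s ^ 2 = 1 - e ^ 2) (hb : b * (1 + s) = e)
    (h1s : 1 + s ≠ 0) (x : ℝ) :
    (1 - b ^ 2) * (1 - e * cos x) = s * (1 - 2 * b * cos x + b ^ 2) := by
  have hbs : b ^ 2 * (1 + s) = 1 - s := by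
    have : (b ^ 2 * (1 + s) - (1 - s)) * (1 + s) = 0 := by
      linear_combination (b * (1 + s) + e) * hb + hs
    simpa [sub_eq_zero, h1s] using this
  rw [← hb]
  linear_combination (b * cos x - 1) * hbs

section KeplerIntegrals

variable {e : ℝ}

theorem integral_inv_one_sub_mul_cos (he : |e| < 1) :
    ∫ x in (0 : ℝ)..2 * π, (1 - e * cos x)⁻¹ = 2 * π / √(1 - e ^ 2) := by
  set s := √(1 - e ^ 2)
  have hs2 : s ^ 2 = 1 - e ^ 2 := sq_sqrt (by nlinarith [sq_abs e, abs_nonneg e])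
  have hs : 0 < s := sqrt_pos.2 (by nlinarith [sq_abs e, abs_nonneg e])
  set b := e / (1 + s)
  have hbe : b * (1 + s) = e := div_mul_cancel₀ e (by linarith)
  have hb : |b| < 1 := by
    rw [abs_div, abs_of_pos (by linarith : 0 < 1 + s), div_lt_one (by linarith)]; linarith
  clear_value s b
  have hderiv (x : ℝ) : HasDerivAt (fun y => (y + 2 * arctan (b * sin y / (1 - b * cos y))) / s)
      (1 - e * cos x)⁻¹ x := by
    refine ((hasDerivAt_add_two_mul_arctan hb x).div_const s).congr_deriv ?_
    rw [div_div, inv_eq_one_div, div_eq_div_iff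
      (mul_ne_zero (one_sub_two_mul_cos_add_sq_pos hb x).ne' hs.ne')
      (one_sub_mul_cos_pos he x).ne']
    linear_combination one_sub_sq_mul_one_sub_mul_cos hs2 hbe (by linarith) x
  have hu (x : ℝ) : 1 - e * cos x ≠ 0 := (one_sub_mul_cos_pos he x).ne'
  have hcont : Continuous fun x => (1 - e * cos x)⁻¹ := by fun_prop (disch := exact hu)
  rw [intervalIntegral.integral_eq_sub_of_hasDerivAt (fun x _ => hderiv x)
    (hcont.intervalIntegrable _ _)]
  simp [sin_two_pi, cos_two_pi]

theorem integral_cos_sub_div_one_sub_mul_cos_sq (he : |e| < 1) :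
    ∫ x in (0 : ℝ)..2 * π, (cos x - e) / (1 - e * cos x) ^ 2 = 0 := by
  have hu (x : ℝ) : 1 - e * cos x ≠ 0 := (one_sub_mul_cos_pos he x).ne'
  have hderiv (x : ℝ) : HasDerivAt (fun y => sin y / (1 - e * cos y))
      ((cos x - e) / (1 - e * cos x) ^ 2) x := by
    refine ((hasDerivAt_sin x).div (hasDerivAt_one_sub_mul_cos e x) (hu x)).congr_deriv ?_
    congr 1
    linear_combination (-e) * sin_sq_add_cos_sq x
  have hcont : Continuous fun x => (cos x - e) / (1 - e * cos x) ^ 2 := by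
    fun_prop (disch := exact fun x => pow_ne_zero 2 (hu x))
  rw [intervalIntegral.integral_eq_sub_of_hasDerivAt (fun x _ => hderiv x)
    (hcont.intervalIntegrable _ _)]
  simp [sin_two_pi, cos_two_pi]

theorem integral_kepler_combination (he : |e| < 1) (A B C D : ℝ) :
    ∫ x in (0 : ℝ)..2 * π, (A * (1 - e * cos x)⁻¹ + B + C * cos x
        + D * ((cos x - e) / (1 - e * cos x) ^ 2)) =
      2 * π * (A / √(1 - e ^ 2) + B) := by
  have hu (x : ℝ) : 1 - e * cos x ≠ 0 := (one_sub_mul_cos_pos he x).ne'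
  rw [intervalIntegral.integral_add, intervalIntegral.integral_add, intervalIntegral.integral_add,
    intervalIntegral.integral_const_mul, intervalIntegral.integral_const_mul,
    intervalIntegral.integral_const_mul, integral_inv_one_sub_mul_cos he,
    integral_cos_sub_div_one_sub_mul_cos_sq he, integral_cos]
  · simp only [intervalIntegral.integral_const, sin_two_pi, sin_zero, smul_eq_mul]
    ring
  all_goals refine Continuous.intervalIntegrable ?_ _ _
  all_goals fun_prop (disch := first | exact hu | exact fun x => pow_ne_zero 2 (hu x))

end KeplerIntegrals

lemma relativistic_integrand_eq {a e : ℝ} (β μ υ E : ℝ) (ha : a ≠ 0) (hu : 1 - e * cos E ≠ 0) :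
    (-((1 - 3 * υ) / 8) * μ * (β * (2 / (a * (1 - e * cos E)) - 1 / a)) ^ 2
        - β * (3 + υ) / 2 * μ * (β * (2 / (a * (1 - e * cos E)) - 1 / a))
            / (a * (1 - e * cos E))
        - β * υ / 2 * μ * (β * e ^ 2 * sin E ^ 2 / (a * (1 - e * cos E) ^ 2))
            / (a * (1 - e * cos E))
        + β ^ 2 / 2 * μ / (a * (1 - e * cos E)) ^ 2) * (1 - e * cos E) =
      μ * β ^ 2 / a ^ 2 * (-3 * (1 - e * cos E)⁻¹ + (15 - υ) / 8
        + (1 - 3 * υ) * e / 8 * cos E + υ * e / 2 * ((cos E - e) / (1 - e * cos E) ^ 2)) := by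
  rw [sin_sq]
  field_simp
  ring

theorem relativistic_secular_hamiltonian_average_general (a β μ c e υ : ℝ)
    (ha : 0 < a) (he0 : 0 < e) (he1 : e < 1)
    (γ₁ γ₂ γ₃ γ₄ : ℝ)
    (hγ₁ : γ₁ = (1 - 3 * υ) / 8) (hγ₂ : γ₂ = β * (3 + υ) / 2)
    (hγ₃ : γ₃ = β * υ / 2) (hγ₄ : γ₄ = β ^ 2 / 2) :
    (1 / (2 * π * c ^ 2)) * ∫ E in (0:ℝ)..(2 * π),
        (-γ₁ * μ * (β * (2 / (a * (1 - e * Real.cos E)) - 1 / a)) ^ 2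
          - γ₂ * μ * (β * (2 / (a * (1 - e * Real.cos E)) - 1 / a))
              / (a * (1 - e * Real.cos E))
          - γ₃ * μ * (β * e ^ 2 * Real.sin E ^ 2 / (a * (1 - e * Real.cos E) ^ 2))
              / (a * (1 - e * Real.cos E))
          + γ₄ * μ / (a * (1 - e * Real.cos E)) ^ 2) * (1 - e * Real.cos E) =
      (μ * β ^ 2 / (a ^ 2 * c ^ 2)) * ((15 - υ) / 8 - 3 / Real.sqrt (1 - e ^ 2)) := by
  subst hγ₁ hγ₂ hγ₃ hγ₄
  have he : |e| < 1 := abs_lt.2 ⟨by linarith, he1⟩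
  rw [intervalIntegral.integral_congr fun E _ =>
      relativistic_integrand_eq β μ υ E ha.ne' (one_sub_mul_cos_pos he E).ne',
    intervalIntegral.integral_const_mul, integral_kepler_combination he]
  field_simp [pi_ne_zero]
  ring

/-- Let `a > 0`, `β > 0`, `μ > 0`, `c > 0`, `0 < e < 1` and `υ` real, and set
`γ₁ = (1 − 3υ)/8`, `γ₂ = β(3 + υ)/2`, `γ₃ = βυ/2`, `γ₄ = β²/2`. Then the mean-anomaly
average of the relativistic two-body correction Hamiltonian equals
`(μβ²/(a²c²)) · [ (15 − υ)/8 − 3/√(1 − e²) ]`. -/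
theorem relativistic_secular_hamiltonian_average (a β μ c e υ : ℝ)
    (ha : 0 < a) (hβ : 0 < β) (hμ : 0 < μ) (hc : 0 < c) (he0 : 0 < e) (he1 : e < 1)
    (γ₁ γ₂ γ₃ γ₄ : ℝ)
    (hγ₁ : γ₁ = (1 - 3 * υ) / 8) (hγ₂ : γ₂ = β * (3 + υ) / 2)
    (hγ₃ : γ₃ = β * υ / 2) (hγ₄ : γ₄ = β ^ 2 / 2) :
    (1 / (2 * π * c ^ 2)) * ∫ E in (0:ℝ)..(2 * π),
        (-γ₁ * μ * (β * (2 / (a * (1 - e * Real.cos E)) - 1 / a)) ^ 2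
          - γ₂ * μ * (β * (2 / (a * (1 - e * Real.cos E)) - 1 / a))
              / (a * (1 - e * Real.cos E))
          - γ₃ * μ * (β * e ^ 2 * Real.sin E ^ 2 / (a * (1 - e * Real.cos E) ^ 2))
              / (a * (1 - e * Real.cos E))
          + γ₄ * μ / (a * (1 - e * Real.cos E)) ^ 2) * (1 - e * Real.cos E) =
      (μ * β ^ 2 / (a ^ 2 * c ^ 2)) * ((15 - υ) / 8 - 3 / Real.sqrt (1 - e ^ 2)) :=
  relativistic_secular_hamiltonian_average_general a β μ c e υ ha he0 he1 γ₁ γ₂ γ₃ γ₄ hγ₁ hγ₂ hγ₃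
    hγ₄
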